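/- Contradiction lemma for infeasible growth: suppose k_n is a sequence of naturals ≥ 2 with k_n (ln n)/n → ∞, and E_n is a sequence of positive reals satisfying both E_n ≤ S n/k_n eventually (for some S > 0) and E_n ≥ δ ln k_n eventually (for some δ > 0). Then a contradiction follows; i.e., no such sequence (E_n) exists. -/
import Mathlib


open Filter

/-- Contradiction lemma for infeasible growth: no sequence of positive `Eₙ` can satisfy
both `Eₙ ≤ S n/kₙ` eventually and `Eₙ ≥ δ ln kₙ` eventually when `kₙ ≥ 2` and
`kₙ (ln n)/n → ∞`. -/
theorem stmt19 (k : ℕ → ℕ) (hk2 : ∀ n, 2 ≤ k n)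
    (hω : Filter.Tendsto (fun n : ℕ => (k n : ℝ) * Real.log n / n) Filter.atTop Filter.atTop)
    (E : ℕ → ℝ) (hE : ∀ n, 0 < E n)
    (S : ℝ) (hS : 0 < S)
    (hO : ∀ᶠ n : ℕ in Filter.atTop, E n ≤ S * n / (k n : ℝ))
    (δ : ℝ) (hδ : 0 < δ)
    (hΩ : ∀ᶠ n : ℕ in Filter.atTop, δ * Real.log (k n) ≤ E n) :
    False := by
  set M : ℝ := max 2 (2 * S / δ + 2) with hM
  have hM2 : (2:ℝ) ≤ M := le_max_left _ _
  have hMS : 2 * S / δ + 2 ≤ M := le_max_right _ _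
  obtain ⟨n, hO', hΩ', h1', hn16⟩ :=
    (hO.and (hΩ.and ((hω.eventually_ge_atTop M).and (eventually_ge_atTop 16)))).exists
  set x : ℝ := (n : ℝ) with hx
  have hx16 : (16:ℝ) ≤ x := by rw [hx]; exact_mod_cast hn16
  have hxpos : (0:ℝ) < x := by linarith
  have hlogxpos : 0 < Real.log x := Real.log_pos (by linarith)
  set K : ℝ := (k n : ℝ) with hK
  have hK2 : (2:ℝ) ≤ K := by rw [hK]; exact_mod_cast hk2 n
  have hKpos : (0:ℝ) < K := by linarith
  -- K * log x ≥ M * x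
  have hKlog : M * x ≤ K * Real.log x := (le_div_iff₀ hxpos).mp h1'
  -- log x ≤ 2 * sqrt x
  set s : ℝ := Real.sqrt x with hs
  have hspos : 0 < s := Real.sqrt_pos.mpr hxpos
  have hss : s * s = x := Real.mul_self_sqrt hxpos.le
  have hlogs : Real.log s ≤ s - 1 := Real.log_le_sub_one_of_pos hspos
  have hlogx2 : Real.log x = 2 * Real.log s := by
    rw [hs, Real.log_sqrt hxpos.le]; ring
  have hlogx_le : Real.log x ≤ 2 * s := by rw [hlogx2]; linarith
  -- K ≥ s
  have hKs : s ≤ K := by nlinarith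
  have hlogK : Real.log x / 2 ≤ Real.log K := by
    have := Real.log_le_log hspos hKs
    rw [hs, Real.log_sqrt hxpos.le] at this
    exact this
  have hlogKpos : 0 < Real.log K := by linarith
  -- δ * log K * K ≤ S * x
  have hfin : δ * Real.log K * K ≤ S * x := by
    have h1 : δ * Real.log K ≤ S * x / K := le_trans hΩ' hO'
    exact (le_div_iff₀ hKpos).mp h1
  -- δ M ≥ 2S + 2δ
  have hdM : 2 * S + 2 * δ ≤ δ * M := by
    have : δ * (2 * S / δ + 2) = 2 * S + 2 * δ := by field_simp
    nlinarith
  -- contradiction: δ K log K ≥ δ M x / 2 ≥ (S + δ) x > S x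
  nlinarith [mul_le_mul_of_nonneg_left hKlog hδ.le,
    mul_le_mul_of_nonneg_left hlogK (mul_pos hδ hKpos).le,
    mul_pos hδ hxpos, mul_pos hxpos hδ]
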